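/- arXiv:cs/0607092 — 5 statements merged into one kernel-verified Lean document; each statement's English description precedes it below -/
import Mathlib

section
/- Let G be a simple graph on vertex set {1,...,n}, π a permutation of {1,...,n}, and A ⊆ V with B = V \ A. Define f : V → ℝ by f(u) = n + π(u) if u ∈ B; f(u) = 0 if u ∈ A and N(u) ∩ B = ∅; and f(u) = max{π(x) : x ∈ N(u) ∩ B} if u ∈ A and N(u) ∩ B ≠ ∅. Let G' be the graph with edge set {(u,v) : u ≠ v, |f(u) - f(v)| ≤ n}. Then G' is a supergraph of G. -/
/-!
Vertices of `A` get values in `[0, n]` and vertices of `B` values in `[n + 1, 2n]`, so only an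
edge between `A` and `B` could be stretched beyond `n`. But if `u ∈ A` is adjacent to `w ∈ B`,
then `w` takes part in the maximum defining `f u`, so `f u ≥ π(w)` and
`f w - f u = n + π(w) - f u ≤ n`.
-/

namespace SimpleGraph

variable {V : Type*} [DecidableEq V] {G : SimpleGraph V} [G.LocallyFinite] {A : Finset V}
  {n : ℕ} {r : V → ℕ} {f : V → ℝ}

theorem apply_mem_Icc_of_mem (hr : ∀ x, r x ≤ n)
    (hA0 : ∀ u ∈ A, (G.neighborFinset u).filter (· ∉ A) = ∅ → f u = 0)
    (hAmax : ∀ u ∈ A, ∀ hne : ((G.neighborFinset u).filter (· ∉ A)).Nonempty,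
      f u = ((((G.neighborFinset u).filter (· ∉ A)).sup' hne r : ℕ) : ℝ))
    {u : V} (hu : u ∈ A) : f u ∈ Set.Icc 0 (n : ℝ) := by
  rcases ((G.neighborFinset u).filter (· ∉ A)).eq_empty_or_nonempty with hempty | hne
  · simp [hA0 u hu hempty]
  · rw [hAmax u hu hne]
    exact ⟨Nat.cast_nonneg _, by exact_mod_cast Finset.sup'_le hne r fun x _ => hr x⟩

theorem le_apply_of_adj
    (hAmax : ∀ u ∈ A, ∀ hne : ((G.neighborFinset u).filter (· ∉ A)).Nonempty,
      f u = ((((G.neighborFinset u).filter (· ∉ A)).sup' hne r : ℕ) : ℝ))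
    {u w : V} (hu : u ∈ A) (hw : w ∉ A) (huw : G.Adj u w) : (r w : ℝ) ≤ f u := by
  have hmem : w ∈ (G.neighborFinset u).filter (· ∉ A) := by
    simp [mem_neighborFinset, huw, hw]
  rw [hAmax u hu ⟨w, hmem⟩]
  exact_mod_cast Finset.le_sup' r hmem

theorem le_fromRel_abs_sub_le (hr : ∀ x, r x ≤ n) (hB : ∀ u, u ∉ A → f u = n + r u)
    (hA0 : ∀ u ∈ A, (G.neighborFinset u).filter (· ∉ A) = ∅ → f u = 0)
    (hAmax : ∀ u ∈ A, ∀ hne : ((G.neighborFinset u).filter (· ∉ A)).Nonempty,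
      f u = ((((G.neighborFinset u).filter (· ∉ A)).sup' hne r : ℕ) : ℝ)) :
    G ≤ fromRel (fun u w => |f u - f w| ≤ n) := by
  have hA {u : V} (hu : u ∈ A) := apply_mem_Icc_of_mem hr hA0 hAmax hu
  have across {u w : V} (huw : G.Adj u w) (hu : u ∈ A) (hw : w ∉ A) : |f u - f w| ≤ n := by
    have hrw : (r w : ℝ) ≤ f u := le_apply_of_adj hAmax hu hw huw
    rw [hB w hw, abs_sub_le_iff]
    constructor <;> linarith [(hA hu).2, (Nat.cast_nonneg (r w) : (0 : ℝ) ≤ r w)]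
  intro u w huw
  refine ⟨G.ne_of_adj huw, Or.inl (show |f u - f w| ≤ n from ?_)⟩
  by_cases hu : u ∈ A <;> by_cases hw : w ∈ A
  · exact abs_sub_le_of_nonneg_of_le (hA hu).1 (hA hu).2 (hA hw).1 (hA hw).2
  · exact across huw hu hw
  · rw [abs_sub_comm]
    exact across huw.symm hw hu
  · rw [hB u hu, hB w hw, add_sub_add_left_eq_sub]
    exact abs_sub_le_of_nonneg_of_le (Nat.cast_nonneg _) (mod_cast hr u)
      (Nat.cast_nonneg _) (mod_cast hr w)

end SimpleGraph

/-- The construction `M(G, π, A)`: with `B = V \ A`, set `f u = n + π(u)` for `u ∈ B`,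
`f u = 0` for `u ∈ A` with `N(u) ∩ B = ∅`, and `f u = max {π(x) : x ∈ N(u) ∩ B}` otherwise
(here `π(u)` denotes the value in `{1,…,n}`).  The indifference graph `G'` with
`u ~ v ↔ u ≠ v ∧ |f u - f v| ≤ n` is a supergraph of `G`. -/
theorem stmt7 (n : ℕ) (G : SimpleGraph (Fin n)) [DecidableRel G.Adj]
    (π : Equiv.Perm (Fin n)) (A : Finset (Fin n)) (f : Fin n → ℝ)
    (hB : ∀ u, u ∉ A → f u = (n : ℝ) + ((π u : ℕ) + 1))
    (hA0 : ∀ u ∈ A, ((G.neighborFinset u).filter (· ∉ A)) = ∅ → f u = 0)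
    (hAmax : ∀ u ∈ A, ∀ hne : ((G.neighborFinset u).filter (· ∉ A)).Nonempty,
      f u = ((((G.neighborFinset u).filter (· ∉ A)).sup' hne fun x => (π x : ℕ) + 1 : ℕ) : ℝ)) :
    G ≤ SimpleGraph.fromRel (fun u w => |f u - f w| ≤ (n : ℝ)) :=
  SimpleGraph.le_fromRel_abs_sub_le (fun x => (π x).isLt) (by exact_mod_cast hB) hA0 hAmax
end

section
/- In the construction G' = M(G, π, A): if u ∈ A, v ∈ B, and (u,v) ∉ E(G'), then π(x) < π(v) for every x ∈ N(u) ∩ B. In particular if additionally (u,v) ∈ E(G) we reach a contradiction, so G ⊆ G'. -/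
/-!
Since `f v = n + π v + 1 ≥ n`, the non-edge condition `|f u - f v| > n` cannot hold with
`f u > f v` once `f u ≤ n`; so it forces `f u < π v + 1`. When `u` has a neighbour in `B`,
`f u` is the maximum of `π x + 1` over those neighbours, which lies in `[π x + 1, n]`
for each of them. Taking `x = v` shows that `(u, v)` is not an edge of `G`.
-/

lemma lt_of_lt_abs_sub_add {a b c : ℝ} (ha : a ≤ c) (hb : 0 ≤ b) (h : c < |a - (c + b)|) :
    a < b := by
  rw [abs_of_nonpos (by linarith)] at h
  linarith

lemma Finset.sup'_val_succ_le {α : Type*} {n : ℕ} (s : Finset α) (hs : s.Nonempty)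
    (g : α → Fin n) : s.sup' hs (fun x => (g x : ℕ) + 1) ≤ n :=
  Finset.sup'_le hs _ fun x _ => (g x).isLt

theorem stmt9_general (n : ℕ) (G : SimpleGraph (Fin n)) [DecidableRel G.Adj]
    (π : Equiv.Perm (Fin n)) (A : Finset (Fin n)) (f : Fin n → ℝ)
    (hB : ∀ u, u ∉ A → f u = (n : ℝ) + ((π u : ℕ) + 1))
    (hAmax : ∀ u ∈ A, ∀ hne : ((G.neighborFinset u).filter (· ∉ A)).Nonempty,
      f u = ((((G.neighborFinset u).filter (· ∉ A)).sup' hne fun x => (π x : ℕ) + 1 : ℕ) : ℝ))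
    (u v : Fin n) (hu : u ∈ A) (hv : v ∉ A)
    (hnadj : ¬ (SimpleGraph.fromRel fun a c => |f a - f c| ≤ (n : ℝ)).Adj u v) :
    (∀ x, G.Adj u x → x ∉ A → π x < π v) ∧ ¬ G.Adj u v := by
  have hgap : (n : ℝ) < |f u - f v| := by
    have huv : u ≠ v := ne_of_mem_of_not_mem hu hv
    simp only [SimpleGraph.fromRel_adj, ne_eq, huv, not_false_eq_true, true_and, not_or,
      not_le] at hnadj
    exact hnadj.1
  have key : ∀ x, G.Adj u x → x ∉ A → π x < π v := by
    intro x hux hxA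
    have hx : x ∈ (G.neighborFinset u).filter (· ∉ A) := by simp [hux, hxA]
    have hfu := hAmax u hu ⟨x, hx⟩
    have hx_le : (π x : ℕ) + 1 ≤ _ := Finset.le_sup' (fun y => (π y : ℕ) + 1) hx
    have hfu_le : f u ≤ n := by
      rw [hfu]
      exact_mod_cast Finset.sup'_val_succ_le _ ⟨x, hx⟩ π
    have hfu_lt : f u < (π v : ℕ) + 1 :=
      lt_of_lt_abs_sub_add hfu_le (by positivity) (hB v hv ▸ hgap)
    rw [hfu] at hfu_lt
    have : (π x : ℕ) + 1 < (π v : ℕ) + 1 := hx_le.trans_lt (by exact_mod_cast hfu_lt)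
    exact Fin.lt_def.mpr (by omega)
  exact ⟨key, fun huv => lt_irrefl _ (key v huv hv)⟩

/-- In `G' = M(G, π, A)`: if `u ∈ A`, `v ∈ B` and `(u,v) ∉ E(G')`, then `π x < π v`
for every `x ∈ N(u) ∩ B`; in particular `(u,v) ∉ E(G)`. -/
theorem stmt9 (n : ℕ) (G : SimpleGraph (Fin n)) [DecidableRel G.Adj]
    (π : Equiv.Perm (Fin n)) (A : Finset (Fin n)) (f : Fin n → ℝ)
    (hB : ∀ u, u ∉ A → f u = (n : ℝ) + ((π u : ℕ) + 1))
    (hA0 : ∀ u ∈ A, ((G.neighborFinset u).filter (· ∉ A)) = ∅ → f u = 0)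
    (hAmax : ∀ u ∈ A, ∀ hne : ((G.neighborFinset u).filter (· ∉ A)).Nonempty,
      f u = ((((G.neighborFinset u).filter (· ∉ A)).sup' hne fun x => (π x : ℕ) + 1 : ℕ) : ℝ))
    (u v : Fin n) (hu : u ∈ A) (hv : v ∉ A)
    (hnadj : ¬ (SimpleGraph.fromRel fun a c => |f a - f c| ≤ (n : ℝ)).Adj u v) :
    (∀ x, G.Adj u x → x ∉ A → π x < π v) ∧ ¬ G.Adj u v :=
  stmt9_general n G π A f hB hAmax u v hu hv hnadj
end

section
/- Let G be a graph on vertices v₁,...,v_n with a linear arrangement of width at most b, n a multiple of b, and blocks B₀,...,B_{k-1} as above. Define f₀ : V → ℝ by f₀(v) = i·n for v ∈ B_i, and let I₀ be the graph where u ~ w iff u ≠ w and |f₀(u) - f₀(w)| ≤ n. Then I₀ is an indifference-graph supergraph of G: E(G) ⊆ E(I₀). -/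
/-! Adjacent vertices of `G` lie at most `b` apart, so their block indices `v / b` differ by at
most one, and `f₀` moves by at most `n` along every edge. -/

theorem Nat.div_le_div_add_one_of_le_add {a c b : ℕ} (h : c ≤ a + b) : c / b ≤ a / b + 1 := by
  rcases b.eq_zero_or_pos with rfl | hb
  · simp
  calc c / b ≤ (a + b) / b := Nat.div_le_div_right h
    _ = a / b + 1 := Nat.add_div_right a hb

theorem abs_natCast_div_sub_natCast_div_le_one {u v b : ℕ} (huv : u ≤ v + b) (hvu : v ≤ u + b) :
    |((u / b : ℕ) : ℝ) - ((v / b : ℕ) : ℝ)| ≤ 1 := by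
  have hu : ((u / b : ℕ) : ℝ) ≤ ((v / b : ℕ) : ℝ) + 1 := by
    exact_mod_cast Nat.div_le_div_add_one_of_le_add huv
  have hv : ((v / b : ℕ) : ℝ) ≤ ((u / b : ℕ) : ℝ) + 1 := by
    exact_mod_cast Nat.div_le_div_add_one_of_le_add hvu
  rw [abs_sub_le_iff]
  constructor <;> linarith

theorem stmt11_general (n b : ℕ) (G : SimpleGraph (Fin n))
    (hwidth : ∀ u v : Fin n, G.Adj u v → (u : ℕ) ≤ (v : ℕ) → (v : ℕ) - (u : ℕ) ≤ b)
    (f₀ : Fin n → ℝ) (hf : ∀ v : Fin n, f₀ v = (((v : ℕ) / b : ℕ) : ℝ) * n) :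
    G ≤ SimpleGraph.fromRel (fun u w => |f₀ u - f₀ w| ≤ (n : ℝ)) := by
  have hclose : ∀ x y : Fin n, G.Adj x y → (y : ℕ) ≤ x + b := by
    intro x y hxy
    rcases le_total (x : ℕ) y with hle | hle
    · have := hwidth x y hxy hle
      omega
    · omega
  intro u w huw
  refine (SimpleGraph.fromRel_adj _ u w).mpr ⟨huw.ne, Or.inl ?_⟩
  rw [hf, hf, ← sub_mul, abs_mul, Nat.abs_cast]
  exact mul_le_of_le_one_left (Nat.cast_nonneg n)
    (abs_natCast_div_sub_natCast_div_le_one (hclose w u huw.symm) (hclose u w huw))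

/-- With the block decomposition of a width-`b` arrangement and `f₀ v = (block of v)·n`,
the indifference graph `I₀` with `u ~ w ↔ u ≠ w ∧ |f₀ u - f₀ w| ≤ n` is a supergraph
of `G`. -/
theorem stmt11 (n b : ℕ) (hb : 1 ≤ b) (hdvd : b ∣ n) (G : SimpleGraph (Fin n))
    (hwidth : ∀ u v : Fin n, G.Adj u v → (u : ℕ) ≤ (v : ℕ) → (v : ℕ) - (u : ℕ) ≤ b)
    (f₀ : Fin n → ℝ) (hf : ∀ v : Fin n, f₀ v = (((v : ℕ) / b : ℕ) : ℝ) * n) :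
    G ≤ SimpleGraph.fromRel (fun u w => |f₀ u - f₀ w| ≤ (n : ℝ)) :=
  stmt11_general n b G hwidth f₀ hf
end

section
/- Let u, v be non-adjacent vertices in graph G. In the RAND construction — where each vertex is independently placed in A or B with probability 1/2, and a uniformly random permutation π of V is chosen independently — the probability that u ∈ A, v ∈ B, and max{π(x) : x ∈ N(u) ∩ B} > π(v) is at most (1/4)·d(u)/(d(u)+1), where d(u) = |N(u)| (with max over the empty set treated as making the event false). -/
/-!
Forgetting that the witness `x` must lie in `B`, the event is contained in the product of
`{π | π v < π x for some neighbour x of u}` and `{A | u ∈ A, v ∉ A}`; the latter has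
`2 ^ (n - 2)` elements. Among the `d(u) + 1` vertices of `{v} ∪ N(u)`, right multiplication by
the transposition `(v w)` maps the permutations maximal at `w` injectively into those maximal
at `v`. These `d(u) + 1` classes cover all permutations, so at least a `1 / (d(u) + 1)` fraction
of them rank `v` above every neighbour of `u`.
-/

open Finset

theorem four_mul_card_filter_mem_and_notMem {α : Type*} [Fintype α] [DecidableEq α] {u v : α}
    (huv : u ≠ v) :
    4 * #{A : Finset α | u ∈ A ∧ v ∉ A} = 2 ^ Fintype.card α := by
  have huB : ∀ B ∈ (univ \ {u, v}).powerset, u ∉ B := fun B hB hu => by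
    simpa using mem_powerset.1 hB hu
  have himage : ({A : Finset α | u ∈ A ∧ v ∉ A} : Finset (Finset α)) =
      (univ \ {u, v}).powerset.image (insert u) := by
    ext A
    simp only [mem_filter, mem_univ, true_and, mem_image, mem_powerset]
    constructor
    · rintro ⟨hu, hv⟩
      refine ⟨A.erase u, fun x hx => ?_, insert_erase hu⟩
      simp only [mem_erase] at hx
      simp only [mem_sdiff, mem_univ, mem_insert, mem_singleton, true_and]
      rintro (rfl | rfl)
      exacts [hx.1 rfl, hv hx.2]
    · rintro ⟨B, hB, rfl⟩
      refine ⟨mem_insert_self u B, fun hv => ?_⟩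
      rcases mem_insert.1 hv with h | h
      · exact huv h.symm
      · simpa using hB h
  have hinj : Set.InjOn (insert u) ((univ \ {u, v}).powerset : Set (Finset α)) :=
    fun B hB C hC h => by rw [← erase_insert (huB B hB), ← erase_insert (huB C hC), h]
  have htwo : 2 ≤ Fintype.card α := (card_pair huv).symm.trans_le (card_le_univ _)
  rw [himage, card_image_of_injOn hinj, card_powerset, card_univ_sdiff, card_pair huv]
  obtain ⟨k, hk⟩ := Nat.exists_eq_add_of_le htwo
  rw [hk, Nat.add_sub_cancel_left, pow_add]
  norm_num

namespace Equiv.Perm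

variable {α : Type*} [Fintype α] [LinearOrder α]

def maximizingAt (S : Finset α) (w : α) : Finset (Perm α) :=
  {π | ∀ x ∈ S, π x ≤ π w}

theorem mul_swap_mem_maximizingAt {S : Finset α} {v w : α} (hv : v ∈ S) (hw : w ∈ S)
    {π : Perm α} (hπ : π ∈ maximizingAt S w) : π * swap v w ∈ maximizingAt S v := by
  simp only [maximizingAt, mem_filter, mem_univ, true_and, mul_apply, swap_apply_left] at hπ ⊢
  intro x hx
  apply hπ
  rcases eq_or_ne x v with rfl | hxv
  · rwa [swap_apply_left]
  rcases eq_or_ne x w with rfl | hxw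
  · rwa [swap_apply_right]
  · rwa [swap_apply_of_ne_of_ne hxv hxw]

theorem card_maximizingAt_le {S : Finset α} {v w : α} (hv : v ∈ S) (hw : w ∈ S) :
    #(maximizingAt S w) ≤ #(maximizingAt S v) :=
  card_le_card_of_injOn (· * swap v w) (fun _ hπ => mul_swap_mem_maximizingAt hv hw hπ)
    (mul_left_injective _).injOn

theorem biUnion_maximizingAt {S : Finset α} (hS : S.Nonempty) :
    S.biUnion (maximizingAt S) = univ := by
  refine eq_univ_of_forall fun π => ?_
  obtain ⟨w, hw, hmax⟩ := S.exists_max_image π hS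
  exact mem_biUnion.2 ⟨w, hw, by simpa [maximizingAt] using hmax⟩

theorem card_perm_le_card_mul_card_maximizingAt {S : Finset α} {v : α} (hv : v ∈ S) :
    Fintype.card (Perm α) ≤ #S * #(maximizingAt S v) := by
  calc Fintype.card (Perm α) = #(S.biUnion (maximizingAt S)) := by
        rw [biUnion_maximizingAt ⟨v, hv⟩, card_univ]
    _ ≤ ∑ w ∈ S, #(maximizingAt S w) := card_biUnion_le
    _ ≤ #S • #(maximizingAt S v) :=
        sum_le_card_nsmul _ _ _ fun w hw => card_maximizingAt_le hv hw

theorem card_add_one_mul_card_exists_lt_le {S : Finset α} {v : α} (hv : v ∉ S) :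
    (#S + 1) * #{π : Perm α | ∃ x ∈ S, π v < π x} ≤ #S * Fintype.card (Perm α) := by
  have hcompl : #{π : Perm α | ∃ x ∈ S, π v < π x} + #(maximizingAt (insert v S) v) =
      Fintype.card (Perm α) := by
    have hnot : maximizingAt (insert v S) v =
        ({π | ¬∃ x ∈ S, π v < π x} : Finset (Perm α)) := by
      simp [maximizingAt]
    rw [hnot, card_filter_add_card_filter_not, card_univ]
  have hcover := card_perm_le_card_mul_card_maximizingAt (mem_insert_self v S)
  rw [card_insert_of_notMem hv] at hcover
  nlinarith

end Equiv.Perm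

/-- In the RAND construction (uniformly random permutation `π` of `V = Fin n` together with
an independent uniformly random subset `A ⊆ V`, each vertex in `A` with probability `1/2`),
for non-adjacent `u ≠ v` the probability that `u ∈ A`, `v ∉ A`, and
`max {π x : x ∈ N(u) ∩ B} > π v` is at most `(1/4)·d(u)/(d(u)+1)`.
Probability is counted over the uniform finite sample space `Perm (Fin n) × Finset (Fin n)`. -/
theorem stmt16 (n : ℕ) (G : SimpleGraph (Fin n)) [DecidableRel G.Adj]
    (u v : Fin n) (huv : u ≠ v) (hnadj : ¬ G.Adj u v) :
    (Nat.card {ω : Equiv.Perm (Fin n) × Finset (Fin n) //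
        u ∈ ω.2 ∧ v ∉ ω.2 ∧ ∃ x, G.Adj u x ∧ x ∉ ω.2 ∧ ω.1 v < ω.1 x} : ℝ) /
      (Nat.card (Equiv.Perm (Fin n) × Finset (Fin n)) : ℝ)
      ≤ (1 / 4) * ((G.degree u : ℝ) / (G.degree u + 1)) := by
  set d := G.degree u with hd
  set P := Fintype.card (Equiv.Perm (Fin n))
  set Eπ := #{π : Equiv.Perm (Fin n) | ∃ x ∈ G.neighborFinset u, π v < π x}
  set EA := #{A : Finset (Fin n) | u ∈ A ∧ v ∉ A}
  set E := Nat.card {ω : Equiv.Perm (Fin n) × Finset (Fin n) //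
      u ∈ ω.2 ∧ v ∉ ω.2 ∧ ∃ x, G.Adj u x ∧ x ∉ ω.2 ∧ ω.1 v < ω.1 x} with hE
  have hevent : E ≤ Eπ * EA := by
    rw [hE, Nat.card_eq_fintype_card, Fintype.card_subtype, ← card_product]
    refine card_le_card fun ω hω => ?_
    simp only [mem_filter, mem_univ, true_and, mem_product, SimpleGraph.mem_neighborFinset]
      at hω ⊢
    obtain ⟨hu, hv, x, hx, -, hlt⟩ := hω
    exact ⟨⟨x, hx, hlt⟩, hu, hv⟩
  have hperm : (d + 1) * Eπ ≤ d * P := by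
    rw [hd, ← G.card_neighborFinset_eq_degree]
    -- `convert` reconciles the two `DecidableEq (Fin n)` instances behind `Fintype (Perm (Fin n))`
    convert Equiv.Perm.card_add_one_mul_card_exists_lt_le (S := G.neighborFinset u)
      (by simpa using hnadj)
  have hsets : 4 * EA = 2 ^ n := by
    simpa using four_mul_card_filter_mem_and_notMem huv
  have hspace : Nat.card (Equiv.Perm (Fin n) × Finset (Fin n)) = P * 2 ^ n := by
    rw [Nat.card_eq_fintype_card, Fintype.card_prod, Fintype.card_finset, Fintype.card_fin]
  have key : E * (4 * (d + 1)) ≤ d * (P * 2 ^ n) :=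
    calc _ ≤ Eπ * EA * (4 * (d + 1)) := Nat.mul_le_mul_right _ hevent
      _ = (d + 1) * Eπ * (4 * EA) := by ring
      _ ≤ d * P * 2 ^ n := by rw [hsets]; exact Nat.mul_le_mul_right _ hperm
      _ = d * (P * 2 ^ n) := by ring
  have hP : 0 < P := Fintype.card_pos
  rw [hspace, div_mul_div_comm, one_mul,
    div_le_div_iff₀ (by positivity) (by positivity)]
  exact_mod_cast key
end

section
/- Let u, v be non-adjacent vertices of G and let G' be the random graph produced by RAND. Then Pr[(u,v) ∈ E(G')] ≤ 1/2 + (1/4)(d(u)/(d(u)+1) + d(v)/(d(v)+1)), where the edge (u,v) appears in G' iff one of three mutually exclusive events occurs: (1) u,v both in A or both in B; (2) u ∈ A, v ∈ B and max{π(x): x ∈ N(u)∩B} > π(v); (3) u ∈ B, v ∈ A and max{π(x): x ∈ N(v)∩B} > π(u). -/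
open Finset

variable {n : ℕ}

-- key permutation counting lemma
lemma permA (v : Fin n) (S : Finset (Fin n)) (hv : v ∉ S) :
    (S.card + 1) * (univ.filter (fun π : Equiv.Perm (Fin n) => ∀ x ∈ S, π x < π v)).card
      = Fintype.card (Equiv.Perm (Fin n)) := by
  classical
  set T : Finset (Fin n) := insert v S with hT
  have hvT : v ∈ T := mem_insert_self _ _
  -- classes
  have hswapmem : ∀ t ∈ T, ∀ x ∈ T, Equiv.swap v t x ∈ T := by
    intro t ht x hx
    rcases eq_or_ne x v with rfl | hxv
    · simpa [Equiv.swap_apply_left] using ht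
    rcases eq_or_ne x t with rfl | hxt
    · simpa [Equiv.swap_apply_right] using hvT
    · simpa [Equiv.swap_apply_of_ne_of_ne hxv hxt] using hx
  have hclass : ∀ t ∈ T,
      (univ.filter (fun π : Equiv.Perm (Fin n) => ∀ x ∈ T, π x ≤ π t)).card
        = (univ.filter (fun π : Equiv.Perm (Fin n) => ∀ x ∈ T, π x ≤ π v)).card := by
    intro t ht
    apply Finset.card_bij' (fun π _ => (Equiv.swap v t).trans π)
      (fun π _ => (Equiv.swap v t).trans π)
    · intro π hπ
      simp only [mem_filter, mem_univ, true_and] at hπ ⊢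
      intro x hx
      simpa [Equiv.swap_apply_left] using hπ _ (hswapmem t ht x hx)
    · intro π hπ
      simp only [mem_filter, mem_univ, true_and] at hπ ⊢
      intro x hx
      simpa [Equiv.swap_apply_right] using hπ _ (hswapmem t ht x hx)
    · intro π _; ext x; simp [Equiv.swap_apply_self]
    · intro π _; ext x; simp [Equiv.swap_apply_self]
  have hcover : (univ : Finset (Equiv.Perm (Fin n)))
      = T.biUnion (fun t => univ.filter (fun π : Equiv.Perm (Fin n) => ∀ x ∈ T, π x ≤ π t)) := by
    ext π
    simp only [mem_univ, true_iff, mem_biUnion, mem_filter, true_and]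
    have hne : (T.image π).Nonempty := (Nonempty.image ⟨v, hvT⟩ π)
    obtain ⟨t, ht, hmax⟩ := mem_image.1 ((T.image π).max'_mem hne)
    exact ⟨t, ht, fun x hx => hmax ▸ Finset.le_max' _ _ (mem_image_of_mem π hx)⟩
  have hdisj : ∀ t₁ ∈ T, ∀ t₂ ∈ T, t₁ ≠ t₂ → Disjoint
      (univ.filter (fun π : Equiv.Perm (Fin n) => ∀ x ∈ T, π x ≤ π t₁))
      (univ.filter (fun π : Equiv.Perm (Fin n) => ∀ x ∈ T, π x ≤ π t₂)) := by
    intro t₁ h₁ t₂ h₂ hne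
    rw [Finset.disjoint_left]
    intro π hπ₁ hπ₂
    simp only [mem_filter, mem_univ, true_and] at hπ₁ hπ₂
    exact hne (π.injective (le_antisymm (hπ₂ _ h₁) (hπ₁ _ h₂)))
  have hKT : Fintype.card (Equiv.Perm (Fin n))
      = T.card * (univ.filter (fun π : Equiv.Perm (Fin n) => ∀ x ∈ T, π x ≤ π v)).card := by
    rw [← Finset.card_univ]
    conv_lhs => rw [hcover]
    rw [Finset.card_biUnion hdisj]
    rw [Finset.sum_congr rfl hclass, Finset.sum_const, smul_eq_mul]
  have hTcard : T.card = S.card + 1 := by rw [hT, card_insert_of_notMem hv]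
  have hfeq : (univ.filter (fun π : Equiv.Perm (Fin n) => ∀ x ∈ T, π x ≤ π v))
      = (univ.filter (fun π : Equiv.Perm (Fin n) => ∀ x ∈ S, π x < π v)) := by
    apply filter_congr
    intro π _
    simp only [hT, mem_insert, forall_eq_or_imp, le_refl, true_and, eq_iff_iff]
    constructor
    · intro h x hx
      exact lt_of_le_of_ne (h x hx) (fun he => hv (by rwa [π.injective he] at hx))
    · intro h x hx; exact (h x hx).le
  rw [hKT, hTcard, hfeq]

lemma permB (v : Fin n) (S : Finset (Fin n)) (hv : v ∉ S) (d : ℕ) (hd : S.card ≤ d) :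
    (univ.filter (fun π : Equiv.Perm (Fin n) => ∃ x ∈ S, π v < π x)).card * (d + 1)
      ≤ d * Fintype.card (Equiv.Perm (Fin n)) := by
  classical
  set m := (univ.filter (fun π : Equiv.Perm (Fin n) => ∀ x ∈ S, π x < π v)).card with hm
  set c := (univ.filter (fun π : Equiv.Perm (Fin n) => ∃ x ∈ S, π v < π x)).card with hc
  have hcompl : c + m = Fintype.card (Equiv.Perm (Fin n)) := by
    rw [hc, hm, ← Finset.card_univ]
    have : (univ.filter (fun π : Equiv.Perm (Fin n) => ∀ x ∈ S, π x < π v))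
        = (univ.filter (fun π : Equiv.Perm (Fin n) => ¬ ∃ x ∈ S, π v < π x)) := by
      apply filter_congr
      intro π _
      simp only [not_exists, not_lt, eq_iff_iff, not_and]
      constructor
      · intro h x hx; exact (h x hx).le
      · intro h x hx
        exact lt_of_le_of_ne (h x hx) (fun he => hv (by rwa [π.injective he] at hx))
    rw [this]
    exact Finset.card_filter_add_card_filter_not _
  have hA := permA v S hv
  have hckm : c = S.card * m := by
    have : c + m = S.card * m + m := by
      rw [hcompl, ← hA]; ring
    omega
  have h1 : S.card * m ≤ d * m := Nat.mul_le_mul hd (le_refl m)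
  calc c * (d + 1) = S.card * m * d + c := by rw [hckm]; ring
    _ ≤ S.card * m * d + d * m := by
        exact Nat.add_le_add_left (le_trans (le_of_eq hckm) h1) _
    _ = d * (S.card * m + m) := by ring
    _ = d * (c + m) := by rw [hckm]
    _ = d * Fintype.card (Equiv.Perm (Fin n)) := by rw [hcompl]

lemma cardSymmDiff (w : Fin n) (q : Finset (Fin n) → Prop) [DecidablePred q] :
    (univ.filter (fun A => q (symmDiff A {w}))).card = (univ.filter q).card := by
  classical
  apply Finset.card_nbij' (fun A => symmDiff A {w}) (fun A => symmDiff A {w}) <;>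
    simp [Set.MapsTo, Function.LeftInverse, Set.LeftInvOn, symmDiff_symmDiff_cancel_right]

lemma memSD (x w : Fin n) (A : Finset (Fin n)) :
    x ∈ symmDiff A {w} ↔ ((x ∈ A ∧ x ≠ w) ∨ (x = w ∧ x ∉ A)) := by
  simp [Finset.mem_symmDiff]

lemma cardCongrSD (w : Fin n) (p q : Finset (Fin n) → Prop)
    [DecidablePred p] [DecidablePred q] (h : ∀ A, p (symmDiff A {w}) ↔ q A) :
    (univ.filter p).card = (univ.filter q).card := by
  rw [← cardSymmDiff w p]
  exact congrArg Finset.card (filter_congr fun A _ => by rw [h])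

lemma splitcard (p q : Finset (Fin n) → Prop) [DecidablePred p] [DecidablePred q] :
    (univ.filter fun A => p A ∧ q A).card + (univ.filter fun A => p A ∧ ¬ q A).card
      = (univ.filter p).card := by
  classical
  rw [← Finset.filter_filter, ← Finset.filter_filter,
    Finset.card_filter_add_card_filter_not]

lemma countE2 (u v : Fin n) (huv : u ≠ v) :
    4 * (univ.filter (fun A : Finset (Fin n) => u ∈ A ∧ v ∉ A)).card = 2 ^ n := by
  classical
  have e1 : (univ.filter (fun A : Finset (Fin n) => u ∈ A ∧ v ∈ A)).card
      = (univ.filter (fun A : Finset (Fin n) => u ∈ A ∧ v ∉ A)).card := by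
    apply cardCongrSD v
    intro A
    simp only [memSD, huv]
    tauto
  have e2 : (univ.filter (fun A : Finset (Fin n) => ¬ u ∈ A ∧ v ∈ A)).card
      = (univ.filter (fun A : Finset (Fin n) => u ∈ A ∧ v ∈ A)).card := by
    apply cardCongrSD u
    intro A
    simp only [memSD, huv.symm]
    tauto
  have e3 : (univ.filter (fun A : Finset (Fin n) => ¬ u ∈ A ∧ ¬ v ∈ A)).card
      = (univ.filter (fun A : Finset (Fin n) => u ∈ A ∧ ¬ v ∈ A)).card := by
    apply cardCongrSD u
    intro A
    simp only [memSD, huv.symm]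
    tauto
  have hA := splitcard (fun A : Finset (Fin n) => u ∈ A) (fun A => v ∈ A)
  have hB := splitcard (fun A : Finset (Fin n) => ¬ u ∈ A) (fun A => v ∈ A)
  have hC : (univ.filter (fun A : Finset (Fin n) => u ∈ A)).card
      + (univ.filter (fun A : Finset (Fin n) => ¬ u ∈ A)).card = 2 ^ n := by
    rw [Finset.card_filter_add_card_filter_not, Finset.card_univ,
      Fintype.card_finset, Fintype.card_fin]
  omega

lemma countE1 (u v : Fin n) (huv : u ≠ v) :
    2 * (univ.filter
      (fun A : Finset (Fin n) => (u ∈ A ∧ v ∈ A) ∨ (u ∉ A ∧ v ∉ A))).card = 2 ^ n := by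
  classical
  have key : (univ.filter (fun A : Finset (Fin n) =>
        ¬ ((u ∈ A ∧ v ∈ A) ∨ (u ∉ A ∧ v ∉ A)))).card
      = (univ.filter (fun A : Finset (Fin n) => (u ∈ A ∧ v ∈ A) ∨ (u ∉ A ∧ v ∉ A))).card := by
    apply cardCongrSD v
    intro A
    simp only [memSD, huv]
    tauto
  have h := Finset.card_filter_add_card_filter_not
    (s := (univ : Finset (Finset (Fin n))))
    (p := fun A => (u ∈ A ∧ v ∈ A) ∨ (u ∉ A ∧ v ∉ A))
  rw [Finset.card_univ, Fintype.card_finset, Fintype.card_fin] at h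
  omega

lemma perA (G : SimpleGraph (Fin n)) [DecidableRel G.Adj] (u v : Fin n)
    (hnadj : ¬ G.Adj u v) (A : Finset (Fin n)) :
    (univ.filter (fun π : Equiv.Perm (Fin n) =>
        ∃ x, G.Adj u x ∧ x ∉ A ∧ π v < π x)).card * (G.degree u + 1)
      ≤ G.degree u * Fintype.card (Equiv.Perm (Fin n)) := by
  classical
  set S := (G.neighborFinset u).filter (fun x => x ∉ A) with hS
  have hv : v ∉ S := by
    simp only [hS, mem_filter, SimpleGraph.mem_neighborFinset]
    tauto
  have hd : S.card ≤ G.degree u := by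
    rw [← G.card_neighborFinset_eq_degree]
    exact card_filter_le _ _
  have key := permB v S hv (G.degree u) hd
  have : (univ.filter (fun π : Equiv.Perm (Fin n) => ∃ x, G.Adj u x ∧ x ∉ A ∧ π v < π x))
      = (univ.filter (fun π : Equiv.Perm (Fin n) => ∃ x ∈ S, π v < π x)) := by
    apply filter_congr
    intro π _
    simp only [hS, mem_filter, SimpleGraph.mem_neighborFinset, eq_iff_iff]
    constructor
    · rintro ⟨x, h1, h2, h3⟩; exact ⟨x, ⟨h1, h2⟩, h3⟩
    · rintro ⟨x, ⟨h1, h2⟩, h3⟩; exact ⟨x, h1, h2, h3⟩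
  rw [this]
  exact key

lemma cardProdSnd (Q : Finset (Fin n) → Prop) [DecidablePred Q] :
    (univ.filter (fun ω : Equiv.Perm (Fin n) × Finset (Fin n) => Q ω.2)).card
      = Fintype.card (Equiv.Perm (Fin n)) * (univ.filter Q).card := by
  rw [Finset.card_filter, Fintype.sum_prod_type]
  have h : ∀ x : Equiv.Perm (Fin n),
      (∑ y : Finset (Fin n), if Q ((x, y)).2 then 1 else 0) = (univ.filter Q).card := by
    intro x; rw [Finset.card_filter]
  rw [Finset.sum_congr rfl (fun x _ => h x), Finset.sum_const, Finset.card_univ, smul_eq_mul]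

lemma cardProdDep (Q : Finset (Fin n) → Prop) [DecidablePred Q]
    (R : Equiv.Perm (Fin n) → Finset (Fin n) → Prop) [∀ π A, Decidable (R π A)] :
    (univ.filter (fun ω : Equiv.Perm (Fin n) × Finset (Fin n) => Q ω.2 ∧ R ω.1 ω.2)).card
      = ∑ A ∈ univ.filter Q, (univ.filter (fun π => R π A)).card := by
  rw [Finset.card_filter, Fintype.sum_prod_type_right, Finset.sum_filter]
  apply Finset.sum_congr rfl
  intro A _
  by_cases hQ : Q A
  · simp only [hQ, true_and, if_true]
    rw [Finset.card_filter]
  · simp [hQ]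

lemma E2bound (G : SimpleGraph (Fin n)) [DecidableRel G.Adj] (u v : Fin n)
    (huv : u ≠ v) (hnadj : ¬ G.Adj u v) :
    4 * (univ.filter (fun ω : Equiv.Perm (Fin n) × Finset (Fin n) =>
        u ∈ ω.2 ∧ v ∉ ω.2 ∧ ∃ x, G.Adj u x ∧ x ∉ ω.2 ∧ ω.1 v < ω.1 x)).card
        * (G.degree u + 1)
      ≤ 2 ^ n * (G.degree u * Fintype.card (Equiv.Perm (Fin n))) := by
  classical
  have hre : (univ.filter (fun ω : Equiv.Perm (Fin n) × Finset (Fin n) =>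
        u ∈ ω.2 ∧ v ∉ ω.2 ∧ ∃ x, G.Adj u x ∧ x ∉ ω.2 ∧ ω.1 v < ω.1 x))
      = (univ.filter (fun ω : Equiv.Perm (Fin n) × Finset (Fin n) =>
        (u ∈ ω.2 ∧ v ∉ ω.2) ∧ (∃ x, G.Adj u x ∧ x ∉ ω.2 ∧ ω.1 v < ω.1 x))) := by
    apply filter_congr; intro ω _; simp [and_assoc]
  rw [hre, cardProdDep (fun A => u ∈ A ∧ v ∉ A)
    (fun π A => ∃ x, G.Adj u x ∧ x ∉ A ∧ π v < π x)]
  have hsum : (∑ A ∈ univ.filter (fun A : Finset (Fin n) => u ∈ A ∧ v ∉ A),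
      (univ.filter (fun π : Equiv.Perm (Fin n) => ∃ x, G.Adj u x ∧ x ∉ A ∧ π v < π x)).card)
      * (G.degree u + 1)
      ≤ (univ.filter (fun A : Finset (Fin n) => u ∈ A ∧ v ∉ A)).card
        * (G.degree u * Fintype.card (Equiv.Perm (Fin n))) := by
    rw [Finset.sum_mul]
    calc _ ≤ ∑ _A ∈ univ.filter (fun A : Finset (Fin n) => u ∈ A ∧ v ∉ A),
        G.degree u * Fintype.card (Equiv.Perm (Fin n)) :=
          Finset.sum_le_sum (fun A _ => perA G u v hnadj A)
      _ = _ := by rw [Finset.sum_const, smul_eq_mul]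
  calc 4 * (∑ A ∈ univ.filter (fun A : Finset (Fin n) => u ∈ A ∧ v ∉ A),
      (univ.filter (fun π : Equiv.Perm (Fin n) =>
        ∃ x, G.Adj u x ∧ x ∉ A ∧ π v < π x)).card) * (G.degree u + 1)
      ≤ 4 * ((univ.filter (fun A : Finset (Fin n) => u ∈ A ∧ v ∉ A)).card
        * (G.degree u * Fintype.card (Equiv.Perm (Fin n)))) := by
        rw [mul_assoc]
        exact Nat.mul_le_mul (le_refl 4) hsum
    _ = 2 ^ n * (G.degree u * Fintype.card (Equiv.Perm (Fin n))) := by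
        rw [← mul_assoc, countE2 u v huv]


lemma arith (c c1 c2 c3 K nn du dv : ℕ) (hKpos : 0 < K) (hnn : 0 < nn)
    (hsplit : c ≤ c1 + c2 + c3) (hb1 : 2 * c1 = K * nn)
    (hb2 : 4 * c2 * (du + 1) ≤ nn * (du * K)) (hb3 : 4 * c3 * (dv + 1) ≤ nn * (dv * K)) :
    (c : ℝ) / ((K : ℝ) * (nn : ℝ)) ≤ 1 / 2 + (1 / 4) *
      ((du : ℝ) / ((du : ℝ) + 1) + (dv : ℝ) / ((dv : ℝ) + 1)) := by
  have hDpos : (0:ℝ) < (K : ℝ) * nn := by positivity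
  have hdu1 : (0:ℝ) < 4 * ((du : ℝ) + 1) := by positivity
  have hdv1 : (0:ℝ) < 4 * ((dv : ℝ) + 1) := by positivity
  have h1 : (c1 : ℝ) / ((K : ℝ) * nn) = 1 / 2 := by
    have h := congrArg (fun m : ℕ => (m : ℝ)) hb1
    push_cast at h
    rw [div_eq_iff (ne_of_gt hDpos)]
    linarith
  have h2 : (c2 : ℝ) / ((K : ℝ) * nn) ≤ (du : ℝ) / (4 * ((du : ℝ) + 1)) := by
    rw [div_le_div_iff₀ hDpos hdu1]
    have h := (Nat.cast_le (α := ℝ)).2 hb2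
    push_cast at h
    nlinarith
  have h3 : (c3 : ℝ) / ((K : ℝ) * nn) ≤ (dv : ℝ) / (4 * ((dv : ℝ) + 1)) := by
    rw [div_le_div_iff₀ hDpos hdv1]
    have h := (Nat.cast_le (α := ℝ)).2 hb3
    push_cast at h
    nlinarith
  have hC : (c : ℝ) ≤ (c1 : ℝ) + c2 + c3 := by exact_mod_cast hsplit
  have hfin : (du : ℝ) / (4 * ((du : ℝ) + 1)) = (1/4) * ((du : ℝ) / ((du : ℝ) + 1)) := by
    rw [div_mul_div_comm, one_mul]
  have hfin' : (dv : ℝ) / (4 * ((dv : ℝ) + 1)) = (1/4) * ((dv : ℝ) / ((dv : ℝ) + 1)) := by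
    rw [div_mul_div_comm, one_mul]
  calc (c : ℝ) / ((K : ℝ) * nn) ≤ ((c1 : ℝ) + c2 + c3) / ((K : ℝ) * nn) := by
        apply div_le_div_of_nonneg_right hC hDpos.le
    _ = (c1 : ℝ) / ((K : ℝ) * nn) + (c2 : ℝ) / ((K : ℝ) * nn) + (c3 : ℝ) / ((K : ℝ) * nn) := by
        ring
    _ ≤ 1 / 2 + (du : ℝ) / (4 * ((du : ℝ) + 1)) + (dv : ℝ) / (4 * ((dv : ℝ) + 1)) := by
        rw [h1]; exact add_le_add (add_le_add le_rfl h2) h3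
    _ = 1 / 2 + (1 / 4) * ((du : ℝ) / ((du : ℝ) + 1) + (dv : ℝ) / ((dv : ℝ) + 1)) := by
        rw [hfin, hfin']; ring

lemma cardOr3 {α : Type*} [Fintype α] [DecidableEq α] (p q r : α → Prop)
    [DecidablePred p] [DecidablePred q] [DecidablePred r] :
    (univ.filter (fun a => p a ∨ q a ∨ r a)).card
      ≤ (univ.filter p).card + (univ.filter q).card + (univ.filter r).card := by
  have hss : univ.filter (fun a => p a ∨ q a ∨ r a)
      ⊆ univ.filter p ∪ (univ.filter q ∪ univ.filter r) := by
    intro a ha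
    simp only [mem_filter, mem_union, mem_univ, true_and] at ha ⊢
    exact ha
  refine le_trans (Finset.card_le_card hss) ?_
  refine le_trans (Finset.card_union_le _ _) ?_
  rw [Nat.add_assoc]
  exact Nat.add_le_add_left (Finset.card_union_le _ _) _

/-- For non-adjacent `u ≠ v`, the probability that `(u,v)` is an edge of the random graph
`G' = M(G, π, A)` produced by RAND — which happens iff (1) `u, v` are both in `A` or both
in `B`, or (2) `u ∈ A`, `v ∈ B` and `max {π x : x ∈ N(u) ∩ B} > π v`, or (3) symmetrically
with `u` and `v` swapped — is at most `1/2 + (1/4)(d(u)/(d(u)+1) + d(v)/(d(v)+1))`.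
Probability is counted over the uniform finite sample space `Perm (Fin n) × Finset (Fin n)`. -/
theorem stmt17 (n : ℕ) (G : SimpleGraph (Fin n)) [DecidableRel G.Adj]
    (u v : Fin n) (huv : u ≠ v) (hnadj : ¬ G.Adj u v) :
    (Nat.card {ω : Equiv.Perm (Fin n) × Finset (Fin n) //
        ((u ∈ ω.2 ∧ v ∈ ω.2) ∨ (u ∉ ω.2 ∧ v ∉ ω.2)) ∨
        (u ∈ ω.2 ∧ v ∉ ω.2 ∧ ∃ x, G.Adj u x ∧ x ∉ ω.2 ∧ ω.1 v < ω.1 x) ∨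
        (u ∉ ω.2 ∧ v ∈ ω.2 ∧ ∃ x, G.Adj v x ∧ x ∉ ω.2 ∧ ω.1 u < ω.1 x)} : ℝ) /
      (Nat.card (Equiv.Perm (Fin n) × Finset (Fin n)) : ℝ)
      ≤ 1 / 2 + (1 / 4) *
          ((G.degree u : ℝ) / (G.degree u + 1) + (G.degree v : ℝ) / (G.degree v + 1)) := by
  have hnum : Nat.card {ω : Equiv.Perm (Fin n) × Finset (Fin n) //
        ((u ∈ ω.2 ∧ v ∈ ω.2) ∨ (u ∉ ω.2 ∧ v ∉ ω.2)) ∨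
        (u ∈ ω.2 ∧ v ∉ ω.2 ∧ ∃ x, G.Adj u x ∧ x ∉ ω.2 ∧ ω.1 v < ω.1 x) ∨
        (u ∉ ω.2 ∧ v ∈ ω.2 ∧ ∃ x, G.Adj v x ∧ x ∉ ω.2 ∧ ω.1 u < ω.1 x)}
      = (univ.filter (fun ω : Equiv.Perm (Fin n) × Finset (Fin n) =>
        (((u ∈ ω.2 ∧ v ∈ ω.2) ∨ (u ∉ ω.2 ∧ v ∉ ω.2)) ∨
        (u ∈ ω.2 ∧ v ∉ ω.2 ∧ ∃ x, G.Adj u x ∧ x ∉ ω.2 ∧ ω.1 v < ω.1 x) ∨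
        (u ∉ ω.2 ∧ v ∈ ω.2 ∧ ∃ x, G.Adj v x ∧ x ∉ ω.2 ∧ ω.1 u < ω.1 x)))).card := by
    rw [Nat.card_eq_fintype_card, Fintype.card_subtype]
  have hden : Nat.card (Equiv.Perm (Fin n) × Finset (Fin n))
      = Fintype.card (Equiv.Perm (Fin n)) * 2 ^ n := by
    rw [Nat.card_eq_fintype_card, Fintype.card_prod, Fintype.card_finset, Fintype.card_fin]
  have hsub := cardOr3
      (fun ω : Equiv.Perm (Fin n) × Finset (Fin n) =>
          ((u ∈ ω.2 ∧ v ∈ ω.2) ∨ (u ∉ ω.2 ∧ v ∉ ω.2)))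
      (fun ω : Equiv.Perm (Fin n) × Finset (Fin n) =>
          u ∈ ω.2 ∧ v ∉ ω.2 ∧ ∃ x, G.Adj u x ∧ x ∉ ω.2 ∧ ω.1 v < ω.1 x)
      (fun ω : Equiv.Perm (Fin n) × Finset (Fin n) =>
          u ∉ ω.2 ∧ v ∈ ω.2 ∧ ∃ x, G.Adj v x ∧ x ∉ ω.2 ∧ ω.1 u < ω.1 x)
  have hb1 : 2 * (univ.filter (fun ω : Equiv.Perm (Fin n) × Finset (Fin n) =>
        ((u ∈ ω.2 ∧ v ∈ ω.2) ∨ (u ∉ ω.2 ∧ v ∉ ω.2)))).card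
      = Fintype.card (Equiv.Perm (Fin n)) * 2 ^ n := by
    rw [cardProdSnd (fun A : Finset (Fin n) => (u ∈ A ∧ v ∈ A) ∨ (u ∉ A ∧ v ∉ A)),
      ← Nat.mul_left_comm, countE1 u v huv, Nat.mul_comm]
  have hb2 := E2bound G u v huv hnadj
  have hb3 : 4 * (univ.filter (fun ω : Equiv.Perm (Fin n) × Finset (Fin n) =>
        u ∉ ω.2 ∧ v ∈ ω.2 ∧ ∃ x, G.Adj v x ∧ x ∉ ω.2 ∧ ω.1 u < ω.1 x)).card
        * (G.degree v + 1)
      ≤ 2 ^ n * (G.degree v * Fintype.card (Equiv.Perm (Fin n))) := by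
    have h := E2bound G v u huv.symm (fun h => hnadj h.symm)
    have he : (univ.filter (fun ω : Equiv.Perm (Fin n) × Finset (Fin n) =>
        v ∈ ω.2 ∧ u ∉ ω.2 ∧ ∃ x, G.Adj v x ∧ x ∉ ω.2 ∧ ω.1 u < ω.1 x))
        = (univ.filter (fun ω : Equiv.Perm (Fin n) × Finset (Fin n) =>
        u ∉ ω.2 ∧ v ∈ ω.2 ∧ ∃ x, G.Adj v x ∧ x ∉ ω.2 ∧ ω.1 u < ω.1 x)) := by
      apply Finset.filter_congr
      intro ω _
      tauto
    rwa [he] at h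
  rw [hnum, hden, Nat.cast_mul]
  exact arith _ _ _ _ _ _ _ _ Fintype.card_pos (Nat.pow_pos (by norm_num))
    hsub hb1 hb2 hb3
end
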